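/- arXiv:1911.06742 — 3 statements merged into one kernel-verified Lean document; each statement's English description precedes it below -/
import Mathlib

section
/- Let λ = (λ₁,…,λ_d) be a partition of t into at most d parts (λ₁ ≥ ⋯ ≥ λ_d ≥ 0, Σλᵢ = t) with t < d, so λᵢ = 0 for i > t. Then the product ∏_{1≤i<j≤d} (λᵢ − λⱼ + j − i)/(j − i) is at least (d/(2t))^t. -/
/-!
Every factor is at least 1, so it suffices to keep the pairs `i < t ≤ j` (indices from 0), where
`λ j = 0`. For such a row, with `c = t - i`, the product `∏_{k < d-t} (c + λ i + k) / (c + k)` is a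
ratio of rising factorials and equals `∏_{k < λ i} (c + (d - t) + k) / (c + k)`; since
`c + k ≤ 2t`, each of these `λ i` factors is at least `d / (2t)`. The exponents add up to
`∑ λ i = t`.
-/

open Finset

theorem Antitone.val_add_one_mul_le_sum {d : ℕ} {lam : Fin d → ℕ} (hlam : Antitone lam)
    (j : Fin d) : ((j : ℕ) + 1) * lam j ≤ ∑ i, lam i :=
  calc ((j : ℕ) + 1) * lam j = ∑ _i ∈ Iic j, lam j := by simp
    _ ≤ ∑ i ∈ Iic j, lam i := sum_le_sum fun _ hi => hlam (mem_Iic.mp hi)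
    _ ≤ ∑ i, lam i := sum_le_sum_of_subset (subset_univ _)

theorem Antitone.eq_zero_of_sum_le {d t : ℕ} {lam : Fin d → ℕ} (hlam : Antitone lam)
    (hsum : ∑ i, lam i ≤ t) {j : Fin d} (hj : t ≤ j) : lam j = 0 := by
  by_contra h
  have := (Nat.le_mul_of_pos_right _ (Nat.pos_of_ne_zero h)).trans
    ((hlam.val_add_one_mul_le_sum j).trans hsum)
  omega

theorem one_le_sub_add_sub_div {a b x y : ℝ} (hba : b ≤ a) (hxy : x < y) :
    1 ≤ (a - b + y - x) / (y - x) := by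
  rw [one_le_div (sub_pos.mpr hxy)]
  linarith

theorem prod_range_add_mul_prod_range {R : Type*} [CommSemiring R] (c : R) (n L : ℕ) :
    (∏ k ∈ range n, (c + L + k)) * ∏ k ∈ range L, (c + k) =
      (∏ k ∈ range L, (c + n + k)) * ∏ k ∈ range n, (c + k) := by
  have hL := prod_range_add (fun k : ℕ => c + k) L n
  have hn := prod_range_add (fun k : ℕ => c + k) n L
  simp only [Nat.cast_add, ← add_assoc] at hL hn
  rw [mul_comm, ← hL, add_comm, hn, mul_comm]

theorem prod_range_add_div_comm {c : ℝ} (hc : 0 < c) (n L : ℕ) :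
    ∏ k ∈ range n, (c + L + k) / (c + k) = ∏ k ∈ range L, (c + n + k) / (c + k) := by
  have hpos : ∀ m : ℕ, 0 < ∏ k ∈ range m, (c + k) := fun m =>
    prod_pos fun k _ => by positivity
  rw [prod_div_distrib, prod_div_distrib, div_eq_div_iff (hpos n).ne' (hpos L).ne']
  exact prod_range_add_mul_prod_range c n L

theorem div_two_mul_le_add_sub_div {d t m : ℝ} (hm : 0 < m) (hmt : m ≤ 2 * t) (htd : t ≤ d) :
    d / (2 * t) ≤ (m + (d - t)) / m := by
  rw [div_le_div_iff₀ (by linarith) hm]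
  nlinarith

theorem pow_le_prod_range_add_div {d t c L : ℕ} (htd : t ≤ d) (hc : 0 < c) (hct : c ≤ t)
    (hL : L ≤ t) :
    ((d : ℝ) / (2 * t)) ^ L ≤ ∏ k ∈ range (d - t), ((c : ℝ) + L + k) / (c + k) := by
  rw [prod_range_add_div_comm (by positivity), pow_eq_prod_const]
  refine prod_le_prod (fun _ _ => by positivity) fun k hk => ?_
  have hk : c + k ≤ 2 * t := by grind
  rw [Nat.cast_sub htd, add_right_comm]
  exact div_two_mul_le_add_sub_div (by positivity) (by exact_mod_cast hk) (by exact_mod_cast htd)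

theorem Fin.prod_filter_le_val {M : Type*} [CommMonoid M] {d t : ℕ} (f : ℕ → M) :
    ∏ j ∈ univ.filter (fun j : Fin d => t ≤ (j : ℕ)), f j = ∏ k ∈ range (d - t), f (t + k) := by
  rw [prod_filter, Fin.prod_univ_eq_prod_range (fun j => if t ≤ j then f j else 1), ← prod_filter,
    ← prod_Ico_eq_prod_range]
  congr 1
  ext j
  simp
  omega

theorem pow_le_prod_filter_le_val {d t i L : ℕ} (htd : t ≤ d) (hi : i < t) (hL : L ≤ t) :
    ((d : ℝ) / (2 * t)) ^ L ≤
      ∏ j ∈ univ.filter (fun j : Fin d => t ≤ (j : ℕ)), ((L : ℝ) + j - i) / (j - i) := by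
  rw [Fin.prod_filter_le_val fun j : ℕ => ((L : ℝ) + j - i) / (j - i)]
  convert pow_le_prod_range_add_div htd (Nat.sub_pos_of_lt hi) (Nat.sub_le t i) hL using 2 with k
  push_cast [Nat.cast_sub hi.le]
  ring

theorem stmt_2 (d t : ℕ) (htd : t < d) (lam : Fin d → ℕ)
    (hmono : ∀ i j : Fin d, i ≤ j → lam j ≤ lam i)
    (hsum : ∑ i, lam i = t) :
    ((d : ℝ) / (2 * t)) ^ t ≤
      ∏ p ∈ Finset.univ.filter (fun p : Fin d × Fin d => p.1 < p.2),
        (((lam p.1 : ℝ) - (lam p.2 : ℝ) + ((p.2 : ℕ) : ℝ) - ((p.1 : ℕ) : ℝ)) /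
          (((p.2 : ℕ) : ℝ) - ((p.1 : ℕ) : ℝ))) := by
  have hlam : Antitone lam := fun i j => hmono i j
  have hzero : ∀ j : Fin d, t ≤ j → lam j = 0 := fun j => hlam.eq_zero_of_sum_le hsum.le
  set f : Fin d × Fin d → ℝ := fun p =>
    ((lam p.1 : ℝ) - lam p.2 + (p.2 : ℕ) - (p.1 : ℕ)) / ((p.2 : ℕ) - (p.1 : ℕ))
  set A := univ.filter fun i : Fin d => (i : ℕ) < t
  set B := univ.filter fun j : Fin d => t ≤ (j : ℕ)
  have hf : ∀ p ∈ univ.filter (fun p : Fin d × Fin d => p.1 < p.2), 1 ≤ f p := fun p hp =>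
    one_le_sub_add_sub_div (by exact_mod_cast hlam (mem_filter.mp hp).2.le) (by simpa using hp)
  have hrow : ∀ i ∈ A, ((d : ℝ) / (2 * t)) ^ lam i ≤ ∏ j ∈ B, f (i, j) := by
    intro i hi
    have hL : lam i ≤ t := hsum ▸ single_le_sum (fun _ _ => Nat.zero_le _) (mem_univ i)
    refine (pow_le_prod_filter_le_val htd.le (mem_filter.mp hi).2 hL).trans_eq
      (prod_congr rfl fun j hj => ?_)
    simp [f, hzero j (mem_filter.mp hj).2]
  have hAB : A ×ˢ B ⊆ univ.filter fun p : Fin d × Fin d => p.1 < p.2 := fun p hp => by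
    simp only [A, B, mem_product, mem_filter, mem_univ, true_and] at hp ⊢
    exact Fin.lt_def.mpr (by omega)
  have hsumA : ∑ i ∈ A, lam i = t :=
    hsum ▸ sum_filter_of_ne fun i _ h => not_le.mp fun hi => h (hzero i hi)
  calc ((d : ℝ) / (2 * t)) ^ t = ∏ i ∈ A, ((d : ℝ) / (2 * t)) ^ lam i := by
        rw [prod_pow_eq_pow_sum, hsumA]
    _ ≤ ∏ i ∈ A, ∏ j ∈ B, f (i, j) := prod_le_prod (fun _ _ => by positivity) hrow
    _ = ∏ p ∈ A ×ˢ B, f p := (prod_product _ _ _).symm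
    _ ≤ _ := prod_le_prod_of_subset_of_one_le hAB
        (fun p hp => zero_le_one.trans (hf p (hAB hp))) fun p hp _ => hf p hp
end

section
/- Let λ be a partition of t into at most d parts with t < d. Then ∏_{i=1}^{t} ∏_{α=1}^{λᵢ} (d − i + α)/(t − i + α) ≥ (d/(2t))^t. -/
/-!
Write the factor indexed by `(i, α)` as `(d - i + α) / s` with `s = t - i + α`. Since `α ≤ λᵢ ≤ t`
and `i ≥ 1`, we have `1 ≤ s < 2t`, so the factor is `1 + (d - t) / s ≥ 1 + (d - t) / (2t) ≥ d / (2t)`.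
There are `∑ λᵢ = t` factors.
-/

open Finset

lemma pow_sum_card_le_prod_prod {ι κ R : Type*} [CommSemiring R] [PartialOrder R]
    [IsOrderedRing R] (s : Finset ι) (u : ι → Finset κ) (f : ι → κ → R) {c : R} (hc : 0 ≤ c)
    (h : ∀ i ∈ s, ∀ a ∈ u i, c ≤ f i a) :
    c ^ ∑ i ∈ s, #(u i) ≤ ∏ i ∈ s, ∏ a ∈ u i, f i a :=
  calc c ^ ∑ i ∈ s, #(u i) = ∏ i ∈ s, ∏ _a ∈ u i, c := by
        simp only [prod_const, prod_pow_eq_pow_sum]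
    _ ≤ ∏ i ∈ s, ∏ a ∈ u i, f i a :=
        prod_le_prod (fun _ _ ↦ prod_nonneg fun _ _ ↦ hc)
          fun i hi ↦ prod_le_prod (fun _ _ ↦ hc) (h i hi)

lemma div_two_mul_le_sub_add_div_sub_add {d t i α : ℝ} (hdt : t ≤ d) (hpos : 0 < t - i + α)
    (hαi : α - i ≤ t) :
    d / (2 * t) ≤ (d - i + α) / (t - i + α) := by
  have ht : 0 < t := by linarith
  calc d / (2 * t) ≤ (d - t) / (2 * t) + 1 := by
        rw [div_add_one (by positivity)]
        gcongr
        linarith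
    _ ≤ (d - t) / (t - i + α) + 1 := by
        gcongr
        linarith
    _ = (d - i + α) / (t - i + α) := by
        rw [div_add_one hpos.ne']
        ring

theorem stmt_3_general (d t : ℕ) (htd : t < d) (lam : ℕ → ℕ)
    (hsum : ∑ i ∈ Finset.Icc 1 t, lam i = t) :
    ((d : ℝ) / (2 * t)) ^ t ≤
      ∏ i ∈ Finset.Icc 1 t, ∏ α ∈ Finset.Icc 1 (lam i),
        (((d : ℝ) - (i : ℝ) + (α : ℝ)) / ((t : ℝ) - (i : ℝ) + (α : ℝ))) := by
  have hcard : ∑ i ∈ Icc 1 t, #(Icc 1 (lam i)) = t := by simpa using hsum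
  calc ((d : ℝ) / (2 * t)) ^ t = ((d : ℝ) / (2 * t)) ^ ∑ i ∈ Icc 1 t, #(Icc 1 (lam i)) := by
        rw [hcard]
    _ ≤ _ := pow_sum_card_le_prod_prod _ _ _ (by positivity) fun i hi α hα ↦ ?_
  obtain ⟨hi₁, hit⟩ := mem_Icc.1 hi
  obtain ⟨hα₁, hαlam⟩ := mem_Icc.1 hα
  have hαt : α ≤ t := hαlam.trans (hsum ▸ single_le_sum (fun _ _ ↦ Nat.zero_le _) hi)
  apply div_two_mul_le_sub_add_div_sub_add (by exact_mod_cast htd.le)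
  · linarith [(Nat.cast_le (α := ℝ)).2 hit, (Nat.one_le_cast (α := ℝ)).2 hα₁]
  · linarith [(Nat.cast_le (α := ℝ)).2 hαt, (Nat.one_le_cast (α := ℝ)).2 hi₁]

theorem stmt_3 (d t : ℕ) (htd : t < d) (lam : ℕ → ℕ)
    (hmono : ∀ i j, 1 ≤ i → i ≤ j → j ≤ t → lam j ≤ lam i)
    (hsum : ∑ i ∈ Finset.Icc 1 t, lam i = t) :
    ((d : ℝ) / (2 * t)) ^ t ≤
      ∏ i ∈ Finset.Icc 1 t, ∏ α ∈ Finset.Icc 1 (lam i),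
        (((d : ℝ) - (i : ℝ) + (α : ℝ)) / ((t : ℝ) - (i : ℝ) + (α : ℝ))) :=
  stmt_3_general d t htd lam hsum
end

section
/- Let T and T̂ be quantum channels on the space of n×n matrices such that ‖T(ρ) − T̂(ρ)‖₁ ≤ ε for all states ρ, and suppose ‖T(ρ)‖_∞ ≤ c/n for all states ρ. If T̂ has Kraus rank k (i.e., can be written with k Kraus operators), then k ≥ (1 − ε)·n/c. -/
open Matrix
open scoped ComplexOrder

/-- The trace (Schatten-1) norm of a complex matrix. -/
noncomputable def traceNorm {m : Type*} [Fintype m] [DecidableEq m]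
    (A : Matrix m m ℂ) : ℝ :=
  (((Matrix.posSemidef_conjTranspose_mul_self A).1.eigenvectorUnitary : Matrix m m ℂ) *
    diagonal ((fun x : ℝ => (x : ℂ)) ∘ (√·) ∘ (Matrix.posSemidef_conjTranspose_mul_self A).1.eigenvalues) *
    (star (Matrix.posSemidef_conjTranspose_mul_self A).1.eigenvectorUnitary : Matrix m m ℂ)).trace.re

/-- The operator (spectral) norm of a complex matrix. -/
noncomputable def opNorm {m : Type*} [Fintype m] [DecidableEq m]
    (A : Matrix m m ℂ) : ℝ :=
  ‖Matrix.toEuclideanCLM (𝕜 := ℂ) A‖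

/-!
Feed both channels the pure state `ρ = e eᴴ`. Then `T̂ ρ = ∑ᵢ (Kᵢ e)(Kᵢ e)ᴴ` has trace one and
range inside the span `S` of the vectors `Kᵢ e`, so `dim S ≤ k`. Pairing `T ρ - T̂ ρ` with the
orthogonal projection `P` onto `S` and using Hölder's inequality `|tr (P X)| ≤ ‖P‖_∞ ‖X‖₁` gives
`ε ≥ tr (P T̂ρ) - Re tr (P Tρ) ≥ 1 - dim S ‖Tρ‖_∞ ≥ 1 - k c / n`.
-/

open scoped InnerProductSpace

section

variable {𝕜 E : Type*} [RCLike 𝕜] [NormedAddCommGroup E] [InnerProductSpace 𝕜 E]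
  [FiniteDimensional 𝕜 E]

theorem re_trace_comp_starProjection_le (g : E →L[𝕜] E) (S : Submodule 𝕜 E) :
    RCLike.re (LinearMap.trace 𝕜 E (g ∘L S.starProjection).toLinearMap) ≤
      Module.finrank 𝕜 S * ‖g‖ := by
  set b := stdOrthonormalBasis 𝕜 S
  rw [b.starProjection_eq_sum_rankOne, ContinuousLinearMap.comp_finsetSum]
  simp only [InnerProductSpace.comp_rankOne, ContinuousLinearMap.toLinearMap_sum, map_sum,
    InnerProductSpace.trace_rankOne]
  calc _ ≤ ∑ _j : Fin (Module.finrank 𝕜 S), ‖g‖ := Finset.sum_le_sum fun j _ => ?_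
    _ = _ := by simp
  have hb : ‖(b j : E)‖ = 1 := (Submodule.norm_coe _).trans (b.orthonormal.1 j)
  calc _ ≤ ‖⟪(b j : E), g (b j)⟫_𝕜‖ := RCLike.re_le_norm _
    _ ≤ ‖(b j : E)‖ * ‖g (b j)‖ := norm_inner_le_norm _ _
    _ ≤ ‖g‖ := by simpa [hb] using g.le_opNorm (b j : E)

end

namespace Matrix

variable {m : Type*} [Fintype m] [DecidableEq m]

lemma trace_eq_trace_toEuclideanCLM (A : Matrix m m ℂ) :
    A.trace = LinearMap.trace ℂ _ (toEuclideanCLM (𝕜 := ℂ) A).toLinearMap := by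
  rw [LinearMap.trace_eq_matrix_trace ℂ (EuclideanSpace.basisFun m ℂ).toBasis,
    coe_toEuclideanCLM_eq_toEuclideanLin, EuclideanSpace.basisFun_toBasis]
  exact congrArg trace (LinearMap.toMatrix_toLin _ _ A).symm

lemma trace_eq_sum_inner_toEuclideanCLM {ι : Type*} [Fintype ι] (A : Matrix m m ℂ)
    (b : OrthonormalBasis ι ℂ (EuclideanSpace ℂ m)) :
    A.trace = ∑ i, ⟪b i, toEuclideanCLM (𝕜 := ℂ) A (b i)⟫_ℂ := by
  rw [trace_eq_trace_toEuclideanCLM, LinearMap.trace_eq_sum_inner _ b]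
  rfl

lemma traceNorm_eq_sum_sqrt_eigenvalues (X : Matrix m m ℂ) :
    traceNorm X = ∑ i, √((posSemidef_conjTranspose_mul_self X).1.eigenvalues i) := by
  have hU := (posSemidef_conjTranspose_mul_self X).1.eigenvectorUnitary.2
  rw [traceNorm, trace_mul_cycle, Unitary.star_mul_self_of_mem hU, one_mul, trace_diagonal]
  simp

lemma traceNorm_nonneg (X : Matrix m m ℂ) : 0 ≤ traceNorm X := by
  rw [traceNorm_eq_sum_sqrt_eigenvalues]
  exact Finset.sum_nonneg fun i _ => Real.sqrt_nonneg _

lemma norm_toEuclideanCLM_eigenvectorBasis (X : Matrix m m ℂ) (i : m) :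
    ‖toEuclideanCLM (𝕜 := ℂ) X ((posSemidef_conjTranspose_mul_self X).1.eigenvectorBasis i)‖ =
      √((posSemidef_conjTranspose_mul_self X).1.eigenvalues i) := by
  set hX := (posSemidef_conjTranspose_mul_self X).1
  set b := hX.eigenvectorBasis i
  have hXX : toEuclideanCLM (𝕜 := ℂ) (Xᴴ * X) b = (hX.eigenvalues i : ℂ) • b := by
    ext j
    simpa using congrFun (hX.mulVec_eigenvectorBasis i) j
  have hsq : ‖toEuclideanCLM (𝕜 := ℂ) X b‖ ^ 2 = hX.eigenvalues i := by
    rw [← inner_self_eq_norm_sq (𝕜 := ℂ), ← ContinuousLinearMap.adjoint_inner_right,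
      ← ContinuousLinearMap.star_eq_adjoint, ← map_star, ← mul_apply_eq_comp, ← map_mul,
      star_eq_conjTranspose, hXX, inner_smul_right, inner_self_eq_norm_sq_to_K,
      hX.eigenvectorBasis.orthonormal.1 i]
    simp
  rw [← hsq, Real.sqrt_sq (norm_nonneg _)]

/-- Hölder: evaluate the trace in an eigenbasis `bᵢ` of `Xᴴ X`, where `‖X bᵢ‖ = √λᵢ`. -/
theorem norm_trace_mul_le_opNorm_mul_traceNorm (M X : Matrix m m ℂ) :
    ‖(M * X).trace‖ ≤ opNorm M * traceNorm X := by
  set hX := (posSemidef_conjTranspose_mul_self X).1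
  rw [trace_eq_sum_inner_toEuclideanCLM _ hX.eigenvectorBasis, traceNorm_eq_sum_sqrt_eigenvalues,
    Finset.mul_sum]
  refine (norm_sum_le _ _).trans (Finset.sum_le_sum fun i _ => ?_)
  rw [← norm_toEuclideanCLM_eigenvectorBasis, map_mul, mul_apply_eq_comp]
  calc _ ≤ ‖hX.eigenvectorBasis i‖ * ‖toEuclideanCLM (𝕜 := ℂ) M
          (toEuclideanCLM (𝕜 := ℂ) X (hX.eigenvectorBasis i))‖ := norm_inner_le_norm _ _
    _ ≤ opNorm M * ‖toEuclideanCLM (𝕜 := ℂ) X (hX.eigenvectorBasis i)‖ := by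
      rw [hX.eigenvectorBasis.orthonormal.1 i, one_mul]
      exact ContinuousLinearMap.le_opNorm _ _

theorem one_sub_finrank_mul_opNorm_le_traceNorm_sub (σ τ : Matrix m m ℂ)
    (S : Submodule ℂ (EuclideanSpace ℂ m)) (hτS : ∀ x, toEuclideanCLM (𝕜 := ℂ) τ x ∈ S)
    (hτ : τ.trace = 1) :
    1 - Module.finrank ℂ S * opNorm σ ≤ traceNorm (σ - τ) := by
  set P := (toEuclideanCLM (𝕜 := ℂ)).symm S.starProjection
  have hPτ : P * τ = τ := by
    refine EquivLike.injective (toEuclideanCLM (𝕜 := ℂ) (n := m)) ?_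
    rw [map_mul, StarAlgEquiv.apply_symm_apply]
    ext1 x
    exact Submodule.starProjection_eq_self_iff.mpr (hτS x)
  have hPσ : RCLike.re (P * σ).trace ≤ Module.finrank ℂ S * opNorm σ := by
    rw [trace_mul_comm, trace_eq_trace_toEuclideanCLM, map_mul, StarAlgEquiv.apply_symm_apply]
    exact re_trace_comp_starProjection_le _ S
  have hP : opNorm P ≤ 1 := by
    rw [opNorm, StarAlgEquiv.apply_symm_apply]
    exact S.starProjection_norm_le
  calc 1 - Module.finrank ℂ S * opNorm σ ≤ RCLike.re (-(P * (σ - τ)).trace) := by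
        rw [mul_sub, trace_sub, hPτ, hτ]
        simp only [neg_sub, map_sub, RCLike.one_re]
        linarith
    _ ≤ ‖(P * (σ - τ)).trace‖ := (RCLike.re_le_norm _).trans (norm_neg _).le
    _ ≤ opNorm P * traceNorm (σ - τ) := norm_trace_mul_le_opNorm_mul_traceNorm _ _
    _ ≤ traceNorm (σ - τ) := mul_le_of_le_one_left (traceNorm_nonneg _) hP

variable {ι : Type*} [Fintype ι]

lemma trace_sum_mul_mul_conjTranspose (K : ι → Matrix m m ℂ) (hK : ∑ i, (K i)ᴴ * K i = 1)
    (ρ : Matrix m m ℂ) : (∑ i, K i * ρ * (K i)ᴴ).trace = ρ.trace := by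
  simp_rw [trace_sum, trace_mul_comm _ (K _)ᴴ, ← mul_assoc, ← trace_sum, ← Finset.sum_mul, hK,
    one_mul]

lemma toEuclideanCLM_vecMulVec_apply (a b : m → ℂ) (x : EuclideanSpace ℂ m) :
    toEuclideanCLM (𝕜 := ℂ) (vecMulVec a b) x = (b ⬝ᵥ WithLp.ofLp x) • WithLp.toLp 2 a := by
  ext j
  simp [vecMulVec_mulVec, mul_comm]

lemma toEuclideanCLM_sum_mul_vecMulVec_mul_mem_span (K : ι → Matrix m m ℂ) (e w : m → ℂ)
    (x : EuclideanSpace ℂ m) :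
    toEuclideanCLM (𝕜 := ℂ) (∑ i, K i * vecMulVec e w * (K i)ᴴ) x ∈
      Submodule.span ℂ (Set.range fun i => WithLp.toLp 2 (K i *ᵥ e)) := by
  rw [map_sum, _root_.sum_apply]
  refine Submodule.sum_mem _ fun i _ => ?_
  rw [mul_vecMulVec, vecMulVec_mul, toEuclideanCLM_vecMulVec_apply]
  exact Submodule.smul_mem _ _ (Submodule.subset_span ⟨i, rfl⟩)

end Matrix

theorem stmt_9_general (n : ℕ) (hn : 0 < n) (c ε : ℝ) (hc : 0 < c)
    (T That : Matrix (Fin n) (Fin n) ℂ →ₗ[ℂ] Matrix (Fin n) (Fin n) ℂ)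
    -- T and T̂ are ε-close in trace norm on states:
    (hclose : ∀ ρ : Matrix (Fin n) (Fin n) ℂ, ρ.PosSemidef → ρ.trace = 1 →
      traceNorm (T ρ - That ρ) ≤ ε)
    -- ‖T(ρ)‖_∞ ≤ c/n on states:
    (hTop : ∀ ρ : Matrix (Fin n) (Fin n) ℂ, ρ.PosSemidef → ρ.trace = 1 →
      opNorm (T ρ) ≤ c / n)
    -- T̂ is a quantum channel with Kraus rank (at most) k:
    (k : ℕ) (K : Fin k → Matrix (Fin n) (Fin n) ℂ)
    (hKraus : ∀ ρ, That ρ = ∑ i, K i * ρ * (K i)ᴴ)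
    (hTP : ∑ i, (K i)ᴴ * K i = 1) :
    (1 - ε) * n / c ≤ k := by
  set e : Fin n → ℂ := Pi.single ⟨0, hn⟩ 1
  set ρ := vecMulVec e (star e)
  have hρ : ρ.PosSemidef := posSemidef_vecMulVec_self_star e
  have hρ1 : ρ.trace = 1 := by simp [ρ, e]
  set S := Submodule.span ℂ (Set.range fun i => WithLp.toLp 2 (K i *ᵥ e))
  have hS : Module.finrank ℂ S ≤ k := (finrank_range_le_card _).trans_eq (Fintype.card_fin k)
  have hfar := one_sub_finrank_mul_opNorm_le_traceNorm_sub (T ρ) (That ρ) S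
    (fun x => hKraus ρ ▸ toEuclideanCLM_sum_mul_vecMulVec_mul_mem_span K e (star e) x)
    (by rw [hKraus, trace_sum_mul_mul_conjTranspose K hTP, hρ1])
  have : 1 - ε ≤ k * (c / n) :=
    calc 1 - ε ≤ Module.finrank ℂ S * opNorm (T ρ) := by linarith [hclose ρ hρ hρ1]
      _ ≤ k * (c / n) :=
        mul_le_mul (by exact_mod_cast hS) (hTop ρ hρ hρ1) (norm_nonneg _) k.cast_nonneg
  have hn' : (0 : ℝ) < n := by exact_mod_cast hn
  rw [div_le_iff₀ hc]
  calc (1 - ε) * n ≤ k * (c / n) * n := mul_le_mul_of_nonneg_right this hn'.le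
    _ = k * c := by field_simp

theorem stmt_9 (n : ℕ) (hn : 0 < n) (c ε : ℝ) (hc : 0 < c) (hε : 0 ≤ ε)
    (T That : Matrix (Fin n) (Fin n) ℂ →ₗ[ℂ] Matrix (Fin n) (Fin n) ℂ)
    -- T and T̂ are ε-close in trace norm on states:
    (hclose : ∀ ρ : Matrix (Fin n) (Fin n) ℂ, ρ.PosSemidef → ρ.trace = 1 →
      traceNorm (T ρ - That ρ) ≤ ε)
    -- ‖T(ρ)‖_∞ ≤ c/n on states:
    (hTop : ∀ ρ : Matrix (Fin n) (Fin n) ℂ, ρ.PosSemidef → ρ.trace = 1 →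
      opNorm (T ρ) ≤ c / n)
    -- T̂ is a quantum channel with Kraus rank (at most) k:
    (k : ℕ) (K : Fin k → Matrix (Fin n) (Fin n) ℂ)
    (hKraus : ∀ ρ, That ρ = ∑ i, K i * ρ * (K i)ᴴ)
    (hTP : ∑ i, (K i)ᴴ * K i = 1) :
    (1 - ε) * n / c ≤ k :=
  stmt_9_general n hn c ε hc T That hclose hTop k K hKraus hTP
end
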